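/- Theorem (edge differences vanish on regular graphs): In the regular-graph group-interaction model, assume α_i(t) = α_t for all i and t with liminf_{t→∞} α_t < 1, assume 3|N_i^s ∩ N_j^s| > 2r for every edge (i,j) of G, and assume the profile at some time s equals G, i.e. ‖x_i(s) − x_j(s)‖ ≤ ε for every edge (i,j). Then sup over edges (i,j) of ‖x_i(t) − x_j(t)‖ tends to 0 as t → ∞. In particular, if G is connected, ‖x_i(t) − x_j(t)‖ → 0 for all vertices i, j. -/

import Mathlib

open Finset
open scoped Classical

/-- The closed social neighborhood `N_i^s = {i} ∪ {j : (i,j) ∈ E}` of vertex `i`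
in a locally finite simple graph `G` on `ℤ⁺`. -/
noncomputable def closedNbhd (G : SimpleGraph ℕ+) [∀ v, Fintype (G.neighborSet v)]
    (i : ℕ+) : Finset ℕ+ :=
  insert i (G.neighborFinset i)

/-- The update neighborhood under group interaction:
`N_i(t) = {j : j = i, or (i,j) ∈ E and ‖x_i(t) − x_j(t)‖ ≤ ε}`. -/
noncomputable def updNbhd {d : ℕ} (G : SimpleGraph ℕ+) [∀ v, Fintype (G.neighborSet v)]
    (ε : ℝ) (x : ℕ → ℕ+ → EuclideanSpace ℝ (Fin d)) (t : ℕ) (i : ℕ+) : Finset ℕ+ :=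
  (closedNbhd G i).filter fun j => j = i ∨ (G.Adj i j ∧ ‖x t i - x t j‖ ≤ ε)

/-!
Once every edge of `G` is within the confidence threshold, every agent averages over its whole
closed neighborhood. For an edge `(i, j)` the common part of the two neighborhoods cancels in the
difference of the averages; by `3|N_i^s ∩ N_j^s| > 2r` each neighborhood has fewer than `r / 3`
agents outside it, and each of these lies within one edge of `i` or of `j`. So the maximal edge
difference is multiplied by at most `1 - (1 - α_t) / r ≤ 1`, the profile stays equal to `G`, and
the factor is bounded away from `1` infinitely often because `liminf α_t < 1`. Along a walk, edge differences bound all differences.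
-/

open Filter Topology

section Graph

variable {V E : Type*} [SeminormedAddCommGroup E] (G : SimpleGraph V)

def EdgesWithin (y : V → E) (b : ℝ) : Prop :=
  ∀ i j, G.Adj i j → ‖y i - y j‖ ≤ b

variable {G}

lemma EdgesWithin.mono {y : V → E} {b c : ℝ} (h : EdgesWithin G y b) (hbc : b ≤ c) :
    EdgesWithin G y c :=
  fun i j hij => (h i j hij).trans hbc

lemma EdgesWithin.norm_sub_le_length_mul {y : V → E} {b : ℝ} (h : EdgesWithin G y b)
    {i j : V} (w : G.Walk i j) : ‖y i - y j‖ ≤ w.length * b := by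
  induction w with
  | nil => simp
  | @cons a m c hadj p ih =>
    calc ‖y a - y c‖ ≤ ‖y a - y m‖ + ‖y m - y c‖ := norm_sub_le_norm_sub_add_norm_sub _ _ _
      _ ≤ b + p.length * b := add_le_add (h a m hadj) ih
      _ = (SimpleGraph.Walk.cons hadj p).length * b := by
        rw [SimpleGraph.Walk.length_cons]; push_cast; ring

end Graph

lemma norm_sum_sub_sum_le_of_card_eq {ι E : Type*} [DecidableEq ι] [SeminormedAddCommGroup E]
    {A B : Finset ι} (hcard : A.card = B.card) (f : ι → E) {i j : ι} {b : ℝ}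
    (hA : ∀ k ∈ A, ‖f k - f i‖ ≤ b) (hB : ∀ k ∈ B, ‖f k - f j‖ ≤ b) (hij : ‖f i - f j‖ ≤ b) :
    ‖∑ k ∈ A, f k - ∑ k ∈ B, f k‖ ≤ 3 * (A \ B).card * b := by
  set m := (A \ B).card
  have hm : (B \ A).card = m := (Finset.card_sdiff_comm hcard).symm
  have hsplit : ∑ k ∈ A, f k - ∑ k ∈ B, f k =
      ∑ k ∈ A \ B, (f k - f i) - ∑ k ∈ B \ A, (f k - f j) + m • (f i - f j) := by
    rw [← Finset.sum_sdiff_sub_sum_sdiff, Finset.sum_sub_distrib, Finset.sum_sub_distrib,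
      Finset.sum_const, Finset.sum_const, hm, smul_sub]
    abel
  have hAB : ‖∑ k ∈ A \ B, (f k - f i)‖ ≤ m * b := by
    simpa using norm_sum_le_of_le (A \ B) fun k hk => hA k (Finset.mem_sdiff.1 hk).1
  have hBA : ‖∑ k ∈ B \ A, (f k - f j)‖ ≤ m * b := by
    simpa [hm] using norm_sum_le_of_le (B \ A) fun k hk => hB k (Finset.mem_sdiff.1 hk).1
  have hmij : ‖m • (f i - f j)‖ ≤ m * b :=
    norm_nsmul_le.trans (mul_le_mul_of_nonneg_left hij m.cast_nonneg)
  rw [hsplit]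
  linarith [norm_add_le (∑ k ∈ A \ B, (f k - f i) - ∑ k ∈ B \ A, (f k - f j)) (m • (f i - f j)),
    norm_sub_le (∑ k ∈ A \ B, (f k - f i)) (∑ k ∈ B \ A, (f k - f j))]

section Dynamics

variable {d r : ℕ} {ε : ℝ} {G : SimpleGraph ℕ+} [∀ v, Fintype (G.neighborSet v)]

lemma mem_closedNbhd {i j : ℕ+} : j ∈ closedNbhd G i ↔ j = i ∨ G.Adj i j := by
  simp [closedNbhd]

lemma card_closedNbhd (hr : 1 ≤ r) (hreg : ∀ i, G.degree i = r - 1) (i : ℕ+) :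
    (closedNbhd G i).card = r := by
  rw [closedNbhd, Finset.card_insert_of_notMem (G.notMem_neighborFinset_self i),
    G.card_neighborFinset_eq_degree, hreg]
  omega

lemma three_mul_card_sdiff_closedNbhd_lt (hr : 1 ≤ r) (hreg : ∀ i, G.degree i = r - 1)
    {i j : ℕ+} (hcommon : 2 * r < 3 * (closedNbhd G i ∩ closedNbhd G j).card) :
    3 * (closedNbhd G i \ closedNbhd G j).card < r := by
  have := Finset.card_sdiff_add_card_inter (closedNbhd G i) (closedNbhd G j)
  rw [card_closedNbhd hr hreg] at this
  omega

lemma updNbhd_eq_closedNbhd {x : ℕ → ℕ+ → EuclideanSpace ℝ (Fin d)} {t : ℕ}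
    (h : EdgesWithin G (x t) ε) (i : ℕ+) : updNbhd G ε x t i = closedNbhd G i := by
  refine Finset.filter_true_of_mem fun j hj => ?_
  rcases mem_closedNbhd.1 hj with rfl | hij
  · exact Or.inl rfl
  · exact Or.inr ⟨hij, h i j hij⟩

lemma EdgesWithin.step (hr : 1 ≤ r) (hreg : ∀ i, G.degree i = r - 1)
    (hcommon : ∀ i j, G.Adj i j → 2 * r < 3 * (closedNbhd G i ∩ closedNbhd G j).card)
    {x : ℕ → ℕ+ → EuclideanSpace ℝ (Fin d)} {a : ℝ} {t : ℕ} (ha : a ∈ Set.Icc (0 : ℝ) 1)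
    (hdyn : ∀ i, x (t + 1) i =
      a • x t i + ((1 - a) / ((updNbhd G ε x t i).card : ℝ)) • ∑ k ∈ updNbhd G ε x t i, x t k)
    {b : ℝ} (hbε : b ≤ ε) (h : EdgesWithin G (x t) b) :
    EdgesWithin G (x (t + 1)) ((1 - (1 - a) / r) * b) := by
  intro i j hij
  set A := closedNbhd G i
  set B := closedNbhd G j
  have hrpos : (0 : ℝ) < r := by exact_mod_cast hr
  have hb0 : 0 ≤ b := (norm_nonneg _).trans (h i j hij)
  have hnear : ∀ {v : ℕ+}, ∀ k ∈ closedNbhd G v, ‖x t k - x t v‖ ≤ b := fun k hk => by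
    rcases mem_closedNbhd.1 hk with rfl | hvk
    · simpa using hb0
    · rw [norm_sub_rev]; exact h _ k hvk
  have hsum : ‖∑ k ∈ A, x t k - ∑ k ∈ B, x t k‖ ≤ (r - 1) * b := by
    refine (norm_sum_sub_sum_le_of_card_eq (by rw [card_closedNbhd hr hreg,
      card_closedNbhd hr hreg]) (x t) hnear hnear (h i j hij)).trans
      (mul_le_mul_of_nonneg_right ?_ hb0)
    have := three_mul_card_sdiff_closedNbhd_lt hr hreg (hcommon i j hij)
    have : (3 * (A \ B).card : ℝ) + 1 ≤ r := by exact_mod_cast this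
    linarith
  have hdiff : x (t + 1) i - x (t + 1) j =
      a • (x t i - x t j) + ((1 - a) / r) • (∑ k ∈ A, x t k - ∑ k ∈ B, x t k) := by
    rw [hdyn i, hdyn j, updNbhd_eq_closedNbhd (h.mono hbε), updNbhd_eq_closedNbhd (h.mono hbε),
      card_closedNbhd hr hreg, card_closedNbhd hr hreg, smul_sub, smul_sub]
    abel
  have hc : 0 ≤ (1 - a) / r := div_nonneg (by linarith [ha.2]) hrpos.le
  rw [hdiff]
  calc _ ≤ ‖a • (x t i - x t j)‖ + ‖((1 - a) / r) • (∑ k ∈ A, x t k - ∑ k ∈ B, x t k)‖ :=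
        norm_add_le _ _
    _ ≤ a * b + (1 - a) / r * ((r - 1) * b) := by
        rw [norm_smul, norm_smul, Real.norm_of_nonneg ha.1, Real.norm_of_nonneg hc]
        gcongr
        · exact ha.1
        · exact h i j hij
    _ = (1 - (1 - a) / r) * b := by field_simp; ring

lemma one_sub_div_mem_Icc (hr : 1 ≤ r) {a : ℝ} (ha : a ∈ Set.Icc (0 : ℝ) 1) :
    1 - (1 - a) / r ∈ Set.Icc (0 : ℝ) 1 := by
  have hr' : (1 : ℝ) ≤ r := by exact_mod_cast hr
  have h0 : 0 ≤ (1 - a) / r := div_nonneg (by linarith [ha.2]) (by linarith)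
  have h1 : (1 - a) / r ≤ 1 := (div_le_one (by linarith)).2 (by linarith [ha.1])
  constructor <;> linarith

lemma EdgesWithin.iterate (hr : 1 ≤ r) (hreg : ∀ i, G.degree i = r - 1)
    (hcommon : ∀ i j, G.Adj i j → 2 * r < 3 * (closedNbhd G i ∩ closedNbhd G j).card)
    {x : ℕ → ℕ+ → EuclideanSpace ℝ (Fin d)} {α : ℕ → ℝ} (hα : ∀ t, α t ∈ Set.Icc (0 : ℝ) 1)
    (hdyn : ∀ t i, x (t + 1) i =
      α t • x t i + ((1 - α t) / ((updNbhd G ε x t i).card : ℝ)) • ∑ k ∈ updNbhd G ε x t i, x t k)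
    (hε : 0 ≤ ε) {s : ℕ} (hs : EdgesWithin G (x s) ε) (n : ℕ) :
    EdgesWithin G (x (n + s)) (ε * ∏ k ∈ Finset.range n, (1 - (1 - α (k + s)) / r)) := by
  induction n with
  | zero => simpa using hs
  | succ n ih =>
    have hprod : ∏ k ∈ Finset.range n, (1 - (1 - α (k + s)) / r) ≤ 1 :=
      Finset.prod_le_one (fun k _ => (one_sub_div_mem_Icc hr (hα _)).1)
        (fun k _ => (one_sub_div_mem_Icc hr (hα _)).2)
    have := ih.step hr hreg hcommon (hα _) (hdyn _) (mul_le_of_le_one_right hε hprod)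
    rw [Finset.prod_range_succ, Nat.add_right_comm]
    convert this using 1
    ring

end Dynamics

lemma tendsto_prod_range_zero_of_frequently_le {q : ℕ → ℝ} {μ : ℝ} (hq0 : ∀ n, 0 ≤ q n)
    (hq1 : ∀ n, q n ≤ 1) (hμ : μ < 1) (hfreq : ∃ᶠ n in atTop, q n ≤ μ) :
    Tendsto (fun n => ∏ k ∈ Finset.range n, q k) atTop (𝓝 0) := by
  set P := fun n => ∏ k ∈ Finset.range n, q k
  have hP0 : ∀ n, 0 ≤ P n := fun n => Finset.prod_nonneg fun k _ => hq0 k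
  have hanti : Antitone P := antitone_nat_of_succ_le fun n => by
    simpa only [P, Finset.prod_range_succ] using mul_le_of_le_one_right (hP0 n) (hq1 n)
  have hμ0 : 0 ≤ μ := by
    obtain ⟨n, hn⟩ := hfreq.exists
    exact (hq0 n).trans hn
  have hpow : ∀ m : ℕ, ∃ N, P N ≤ μ ^ m := by
    intro m
    induction m with
    | zero => exact ⟨0, by simp [P]⟩
    | succ m ih =>
      obtain ⟨N, hN⟩ := ih
      obtain ⟨n, hNn, hn⟩ := frequently_atTop.1 hfreq N
      refine ⟨n + 1, ?_⟩
      calc P (n + 1) = P n * q n := Finset.prod_range_succ _ _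
        _ ≤ μ ^ m * μ := mul_le_mul ((hanti hNn).trans hN) hn (hq0 n) (pow_nonneg hμ0 m)
        _ = μ ^ (m + 1) := (pow_succ _ _).symm
  refine tendsto_order.2 ⟨fun c hc => .of_forall fun n => hc.trans_le (hP0 n), fun c hc => ?_⟩
  obtain ⟨m, hm⟩ := exists_pow_lt_of_lt_one hc hμ
  obtain ⟨N, hN⟩ := hpow m
  exact eventually_atTop.2 ⟨N, fun n hn => ((hanti hn).trans hN).trans_lt hm⟩

theorem edge_differences_vanish_general (d r : ℕ) (hr : 1 ≤ r)
    (ε : ℝ) (hε : 0 < ε)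
    (G : SimpleGraph ℕ+) [∀ v, Fintype (G.neighborSet v)]
    (hreg : ∀ i, G.degree i = r - 1)
    (x : ℕ → ℕ+ → EuclideanSpace ℝ (Fin d)) (α : ℕ → ℝ)
    (hα : ∀ t, α t ∈ Set.Icc (0 : ℝ) 1)
    (hliminf : Filter.liminf α Filter.atTop < 1)
    (hcommon : ∀ i j, G.Adj i j →
      2 * r < 3 * (closedNbhd G i ∩ closedNbhd G j).card)
    (hdyn : ∀ t i, x (t + 1) i =
      α t • x t i + ((1 - α t) / ((updNbhd G ε x t i).card : ℝ)) •
        ∑ k ∈ updNbhd G ε x t i, x t k)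
    (s : ℕ) (hprof : ∀ i j, G.Adj i j → ‖x s i - x s j‖ ≤ ε) :
    Filter.Tendsto
      (fun t => ⨆ p : {p : ℕ+ × ℕ+ // G.Adj p.1 p.2},
        ‖x t p.val.1 - x t p.val.2‖) Filter.atTop (nhds 0) ∧
    (G.Connected → ∀ i j : ℕ+,
      Filter.Tendsto (fun t => ‖x t i - x t j‖) Filter.atTop (nhds 0)) := by
  set q : ℕ → ℝ := fun t => 1 - (1 - α t) / r
  have hq : ∀ t, q t ∈ Set.Icc (0 : ℝ) 1 := fun t => one_sub_div_mem_Icc hr (hα t)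
  obtain ⟨β, hβ, hβ1⟩ := exists_between hliminf
  have hrpos : (0 : ℝ) < r := by exact_mod_cast hr
  have hμ : 1 - (1 - β) / r < 1 := by
    have : 0 < (1 - β) / r := div_pos (by linarith) hrpos
    linarith
  have hfreq : ∃ᶠ n in atTop, q (n + s) ≤ 1 - (1 - β) / r := by
    have h := frequently_lt_of_liminf_lt
      (isCoboundedUnder_ge_of_eventually_le atTop (.of_forall fun t => (hα t).2)) hβ
    rw [← map_add_atTop_eq_nat s, frequently_map] at h
    exact h.mono fun n hn => by simp only [q]; gcongr
  set b : ℕ → ℝ := fun t => ε * ∏ k ∈ Finset.range (t - s), q (k + s)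
  have hb : ∀ t, s ≤ t → EdgesWithin G (x t) (b t) := fun t ht => by
    simpa only [Nat.sub_add_cancel ht] using
      EdgesWithin.iterate hr hreg hcommon hα hdyn hε.le hprof (t - s)
  have hb0 : ∀ t, 0 ≤ b t := fun t =>
    mul_nonneg hε.le (Finset.prod_nonneg fun k _ => (hq _).1)
  have hbt : Tendsto b atTop (𝓝 0) := by
    have := ((tendsto_prod_range_zero_of_frequently_le (fun n => (hq _).1)
      (fun n => (hq _).2) hμ hfreq).const_mul ε).comp (tendsto_sub_atTop_nat s)
    rwa [mul_zero] at this
  refine ⟨squeeze_zero' (.of_forall fun t => Real.iSup_nonneg fun _ => norm_nonneg _)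
    ((eventually_ge_atTop s).mono fun t ht => Real.iSup_le (fun p => hb t ht _ _ p.2) (hb0 t))
    hbt, fun hconn i j => ?_⟩
  obtain ⟨w⟩ := hconn.preconnected i j
  exact squeeze_zero' (.of_forall fun t => norm_nonneg _)
    ((eventually_ge_atTop s).mono fun t ht => (hb t ht).norm_sub_le_length_mul w)
    (by simpa using hbt.const_mul (w.length : ℝ))

/-- **Edge differences vanish on regular graphs.** Let `G` be an `(r−1)`-regular
locally finite simple graph on `ℤ⁺`, let all stubbornness levels coincide
(`α_i(t) = α_t`) with `liminf_{t→∞} α_t < 1`, assume `3|N_i^s ∩ N_j^s| > 2r` for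
every edge `(i,j)`, and assume the profile at some time `s` equals `G`
(`‖x_i(s) − x_j(s)‖ ≤ ε` for every edge). Then
`sup_{(i,j) ∈ E} ‖x_i(t) − x_j(t)‖ → 0` as `t → ∞`; in particular, if `G` is
connected, `‖x_i(t) − x_j(t)‖ → 0` for all vertices `i, j`. -/
theorem edge_differences_vanish (d r : ℕ) (hd : 1 ≤ d) (hr : 1 ≤ r)
    (ε : ℝ) (hε : 0 < ε)
    (G : SimpleGraph ℕ+) [∀ v, Fintype (G.neighborSet v)] [DecidableRel G.Adj]
    (hreg : ∀ i, G.degree i = r - 1)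
    (x : ℕ → ℕ+ → EuclideanSpace ℝ (Fin d)) (α : ℕ → ℝ)
    (hα : ∀ t, α t ∈ Set.Icc (0 : ℝ) 1)
    (hliminf : Filter.liminf α Filter.atTop < 1)
    (hcommon : ∀ i j, G.Adj i j →
      2 * r < 3 * (closedNbhd G i ∩ closedNbhd G j).card)
    (hdyn : ∀ t i, x (t + 1) i =
      α t • x t i + ((1 - α t) / ((updNbhd G ε x t i).card : ℝ)) •
        ∑ k ∈ updNbhd G ε x t i, x t k)
    (s : ℕ) (hprof : ∀ i j, G.Adj i j → ‖x s i - x s j‖ ≤ ε) :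
    Filter.Tendsto
      (fun t => ⨆ p : {p : ℕ+ × ℕ+ // G.Adj p.1 p.2},
        ‖x t p.val.1 - x t p.val.2‖) Filter.atTop (nhds 0) ∧
    (G.Connected → ∀ i j : ℕ+,
      Filter.Tendsto (fun t => ‖x t i - x t j‖) Filter.atTop (nhds 0)) :=
  edge_differences_vanish_general d r hr ε hε G hreg x α hα hliminf hcommon hdyn s hprof
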